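/- arXiv:2008.07212 — 2 statements merged into one kernel-verified Lean document; each statement's English description precedes it below -/
import Mathlib

section
/- Let 1 < m ≤ n − 2 and let B₁, B₂ be two distinct singleton subsets of [n]∖[m]. Set D = {x ∈ 𝔽₂ⁿ : supp(x) is not a down-closed subset of ℍ(m,n) contained in [m]∪B₁ or in [m]∪B₂}. Then the code C_D has length |D| = 2ⁿ − 2^m − 2, the map u ↦ c_{D,u} is injective (so C_D has 2ⁿ codewords and dimension n), the minimum weight of a nonzero codeword is d = 2^{n−1} − 2^{m−1} − 2, and Σ_{i=0}^{n−1} ⌈(d+1)/2^i⌉ > 2ⁿ − 2^m − 2; hence by the Griesmer bound no binary linear [2ⁿ − 2^m − 2, n] code has minimum distance exceeding d, i.e., C_D is distance-optimal. -/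
open Finset

/-- The order relation of the hierarchical poset `ℍ(m,n)` on `Fin n`:
`i ⪯ j` iff `i = j`, or `i` lies in the bottom level `[m]` and `j` in the top level. -/
def Hle (n m : ℕ) (i j : Fin n) : Prop :=
  i = j ∨ ((i : ℕ) < m ∧ m ≤ (j : ℕ))

instance (n m : ℕ) : DecidableRel (Hle n m) := fun i j =>
  decidable_of_iff (i = j ∨ ((i : ℕ) < m ∧ m ≤ (j : ℕ))) Iff.rfl

/-- Down-closed subsets of the hierarchical poset `ℍ(m,n)`. -/
def HDownClosed (n m : ℕ) (S : Finset (Fin n)) : Prop :=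
  ∀ i j : Fin n, Hle n m i j → j ∈ S → i ∈ S

instance (n m : ℕ) : DecidablePred (HDownClosed n m) := fun S =>
  decidable_of_iff (∀ i j : Fin n, Hle n m i j → j ∈ S → i ∈ S) Iff.rfl

/-- The bottom level `[m]` of `ℍ(m,n)`, viewed inside `Fin n`. -/
def lowSet (n m : ℕ) : Finset (Fin n) :=
  Finset.univ.filter (fun i => (i : ℕ) < m)

/-- The support of a vector of `𝔽₂ⁿ`, as a subset of `[n]`. -/
def supp {n : ℕ} (x : Fin n → ZMod 2) : Finset (Fin n) :=
  Finset.univ.filter (fun i => x i ≠ 0)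

/-- The standard inner product on `𝔽₂ⁿ`. -/
def ip {n : ℕ} (u x : Fin n → ZMod 2) : ZMod 2 := ∑ i, u i * x i

/-- The Hamming weight of the codeword `c_{D,u} = (u·x)_{x ∈ D}`. -/
def wtD {n : ℕ} (D : Finset (Fin n → ZMod 2)) (u : Fin n → ZMod 2) : ℕ :=
  (D.filter (fun x => ip u x = 1)).card

/-- The Hamming weight of the codeword `c_f(s,u) = (s·f(x) + u·x)_{x ∈ 𝔽₂ⁿ ∖ {0}}`. -/
def wtF {n : ℕ} (f : (Fin n → ZMod 2) → ZMod 2) (s : ZMod 2) (u : Fin n → ZMod 2) : ℕ :=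
  (Finset.univ.filter (fun x : Fin n → ZMod 2 => x ≠ 0 ∧ s * f x + ip u x = 1)).card

/-- The Hamming weight of the first `m` coordinates of `u` (the part `v` of `u = (v,w)`). -/
def wtLow (n m : ℕ) (u : Fin n → ZMod 2) : ℕ :=
  (Finset.univ.filter (fun i : Fin n => (i : ℕ) < m ∧ u i ≠ 0)).card

/-!
Write `Q` for the set of vectors whose support is an ideal of `ℍ(m,n)` inside `[m] ∪ B₁` or
`[m] ∪ B₂`, so that `D` is the complement of `Q`. These ideals are the subsets of `[m]` and the
two sets `[m] ∪ Bᵢ`, so `Q` is the coordinate subspace on `[m]` together with two more vectors,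
and `|Q| = 2^m + 2`. For `u ≠ 0`, the codeword `c_{𝔽₂ⁿ,u}` has weight `2^{n-1}`, and `u·x = 1`
holds on either none or exactly half of a coordinate subspace; hence `u·x = 1` for at most
`2^{m-1} + 2` points `x` of `Q`, and `wt(c_{D,u}) ≥ 2^{n-1} - 2^{m-1} - 2`, with equality for
`u = e₁`. Since this bound is positive, `u ↦ c_{D,u}` is injective. Reading off the binary
expansions of `2^{n-1}` and `2^{m-1}`, the Griesmer sum for `d + 1` equals `2ⁿ - 2^m - 1`.
-/

open Finset

section Vectors

variable {n : ℕ}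

theorem zmod_two_ne_one_iff {a : ZMod 2} : a ≠ 1 ↔ a = 0 := by
  revert a; decide

theorem zmod_two_ne_zero_iff {a : ZMod 2} : a ≠ 0 ↔ a = 1 := by
  revert a; decide

theorem ip_add_left (u v x : Fin n → ZMod 2) : ip (u + v) x = ip u x + ip v x :=
  add_dotProduct u v x

theorem ip_add_right (u x y : Fin n → ZMod 2) : ip u (x + y) = ip u x + ip u y :=
  dotProduct_add u x y

theorem ip_single_one (u : Fin n → ZMod 2) (i : Fin n) : ip u (Pi.single i 1) = u i :=
  dotProduct_single_one u i

theorem single_one_ip (i : Fin n) (x : Fin n → ZMod 2) : ip (Pi.single i 1) x = x i :=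
  single_one_dotProduct i x

theorem mem_supp {x : Fin n → ZMod 2} {i : Fin n} : i ∈ supp x ↔ x i ≠ 0 := by
  simp [supp]

def ind (S : Finset (Fin n)) : Fin n → ZMod 2 := fun i => if i ∈ S then 1 else 0

theorem supp_ind (S : Finset (Fin n)) : supp (ind S) = S := by
  ext i; simp [supp, ind]

theorem ind_supp (x : Fin n → ZMod 2) : ind (supp x) = x := by
  funext i
  simp only [ind, mem_supp]
  generalize x i = a
  revert a; decide

theorem eq_ind_iff {x : Fin n → ZMod 2} {S : Finset (Fin n)} : x = ind S ↔ supp x = S :=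
  ⟨fun h => h ▸ supp_ind S, fun h => h ▸ (ind_supp x).symm⟩

def supportedIn (S : Finset (Fin n)) : Finset (Fin n → ZMod 2) :=
  univ.filter fun x => supp x ⊆ S

theorem mem_supportedIn {S : Finset (Fin n)} {x : Fin n → ZMod 2} :
    x ∈ supportedIn S ↔ supp x ⊆ S := by
  simp [supportedIn]

theorem card_supportedIn (S : Finset (Fin n)) : #(supportedIn S) = 2 ^ #S := by
  rw [← card_powerset]
  refine card_nbij' supp ind (fun x hx => ?_) (fun T hT => ?_) (fun x _ => ind_supp x)
    (fun T _ => supp_ind T)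
  · simpa [mem_supportedIn] using hx
  · simpa [mem_supportedIn, supp_ind] using hT

end Vectors

section Weights

variable {n : ℕ}

theorem wtD_zero (s : Finset (Fin n → ZMod 2)) : wtD s 0 = 0 := by
  simp [wtD, ip]

theorem wtD_le_card (s : Finset (Fin n → ZMod 2)) (u : Fin n → ZMod 2) : wtD s u ≤ #s :=
  card_filter_le _ _

theorem wtD_union_of_disjoint {s t : Finset (Fin n → ZMod 2)} (h : Disjoint s t)
    (u : Fin n → ZMod 2) : wtD (s ∪ t) u = wtD s u + wtD t u := by
  rw [wtD, filter_union, card_union_of_disjoint (disjoint_filter_filter h), wtD, wtD]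

theorem wtD_sdiff_add_wtD {s t : Finset (Fin n → ZMod 2)} (h : t ⊆ s) (u : Fin n → ZMod 2) :
    wtD (s \ t) u + wtD t u = wtD s u := by
  rw [← wtD_union_of_disjoint sdiff_disjoint, sdiff_union_of_subset h]

/-- Translation by `v` swaps the points where `u·x = 1` with those where `u·x = 0`. -/
theorem two_mul_wtD_of_add_mem {P : Finset (Fin n → ZMod 2)} {u v : Fin n → ZMod 2}
    (huv : ip u v = 1) (hP : ∀ x ∈ P, x + v ∈ P) : 2 * wtD P u = #P := by
  have hswap : #(P.filter fun x => ip u x = 1) = #(P.filter fun x => ¬ ip u x = 1) := by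
    refine card_nbij' (· + v) (· + v) (fun x hx => ?_) (fun x hx => ?_)
      (fun x _ => by simp [add_assoc, ZModModule.add_self])
      (fun x _ => by simp [add_assoc, ZModModule.add_self])
    · simp only [mem_coe, mem_filter] at hx ⊢
      refine ⟨hP x hx.1, ?_⟩
      rw [ip_add_right, hx.2, huv]
      decide
    · simp only [mem_coe, mem_filter] at hx ⊢
      refine ⟨hP x hx.1, ?_⟩
      rw [ip_add_right, zmod_two_ne_one_iff.mp hx.2, huv, zero_add]
  rw [wtD, two_mul]
  nth_rewrite 2 [hswap]
  exact card_filter_add_card_filter_not _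

theorem eq_of_forall_mem_ip_eq {D : Finset (Fin n → ZMod 2)} (hD : ∀ u, u ≠ 0 → wtD D u ≠ 0)
    {u₁ u₂ : Fin n → ZMod 2} (h : ∀ x ∈ D, ip u₁ x = ip u₂ x) : u₁ = u₂ := by
  by_contra hne
  refine hD (u₁ + u₂) (fun h0 => hne ?_) (card_eq_zero.mpr (filter_eq_empty_iff.mpr ?_))
  · rwa [← sub_eq_zero, ZModModule.sub_eq_add]
  · intro x hx
    rw [ip_add_left, h x hx, ZModModule.add_self]
    decide

theorem two_mul_wtD_univ {u : Fin n → ZMod 2} (hu : u ≠ 0) : 2 * wtD univ u = 2 ^ n := by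
  obtain ⟨i, hi⟩ := Function.ne_iff.mp hu
  rw [two_mul_wtD_of_add_mem (v := Pi.single i 1) ?_ (fun x _ => mem_univ _)]
  · simp
  · rw [ip_single_one]
    exact zmod_two_ne_zero_iff.mp hi

theorem two_mul_wtD_supportedIn {S : Finset (Fin n)} {u : Fin n → ZMod 2} {i : Fin n}
    (hi : i ∈ S) (hu : u i = 1) : 2 * wtD (supportedIn S) u = 2 ^ #S := by
  rw [← card_supportedIn]
  refine two_mul_wtD_of_add_mem (v := Pi.single i 1) (by rw [ip_single_one, hu]) ?_
  refine fun x hx => mem_supportedIn.mpr fun j hj => ?_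
  by_cases hji : j = i
  · exact hji ▸ hi
  · refine mem_supportedIn.mp hx (mem_supp.mpr ?_)
    simpa [mem_supp, Pi.single_apply, hji] using hj

theorem two_mul_wtD_supportedIn_le (S : Finset (Fin n)) (u : Fin n → ZMod 2) :
    2 * wtD (supportedIn S) u ≤ 2 ^ #S := by
  by_cases h : ∃ i ∈ S, u i = 1
  · obtain ⟨i, hi, hu⟩ := h
    exact (two_mul_wtD_supportedIn hi hu).le
  push Not at h
  suffices hzero : wtD (supportedIn S) u = 0 by simp [hzero]
  refine card_eq_zero.mpr (filter_eq_empty_iff.mpr fun x hx => ?_)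
  have hvanish : ∀ i, u i * x i = 0 := fun i => by
    by_cases hi : i ∈ S
    · rw [zmod_two_ne_one_iff.mp (h i hi), zero_mul]
    · rw [of_not_not (mt mem_supp.mpr (mt (mem_supportedIn.mp hx ·) hi)), mul_zero]
  simp [ip, hvanish]

end Weights

section HierarchicalPoset

variable {n m : ℕ}

theorem mem_lowSet {i : Fin n} : i ∈ lowSet n m ↔ (i : ℕ) < m := by
  simp [lowSet]

theorem card_lowSet (h : m ≤ n) : #(lowSet n m) = m := by
  rw [lowSet, Fin.card_filter_val_lt, min_eq_right h]

theorem notMem_lowSet {b : Fin n} (hb : m ≤ b) : b ∉ lowSet n m := by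
  simp [mem_lowSet, hb]

theorem hDownClosed_and_subset_iff {b : Fin n} (hb : m ≤ b) {S : Finset (Fin n)} :
    (HDownClosed n m S ∧ S ⊆ lowSet n m ∪ {b}) ↔ (S ⊆ lowSet n m ∨ S = lowSet n m ∪ {b}) := by
  constructor
  · rintro ⟨hdown, hsub⟩
    by_cases hbS : b ∈ S
    · refine Or.inr (hsub.antisymm (union_subset (fun i hi => ?_) (singleton_subset_iff.mpr hbS)))
      exact hdown i b (Or.inr ⟨mem_lowSet.mp hi, hb⟩) hbS
    · refine Or.inl fun i hi => ?_
      rcases mem_union.mp (hsub hi) with hlow | hib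
      · exact hlow
      · exact absurd (mem_singleton.mp hib ▸ hi) hbS
  · rintro (hlow | rfl)
    · refine ⟨fun i j hij hj => ?_, hlow.trans subset_union_left⟩
      rcases hij with rfl | ⟨_, hjm⟩
      · exact hj
      · exact absurd (mem_lowSet.mp (hlow hj)) (not_lt.mpr hjm)
    · refine ⟨fun i j hij hj => ?_, subset_refl _⟩
      rcases hij with rfl | ⟨him, _⟩
      · exact hj
      · exact mem_union_left _ (mem_lowSet.mpr him)

def excludedVecs (n m : ℕ) (b₁ b₂ : Fin n) : Finset (Fin n → ZMod 2) :=
  supportedIn (lowSet n m) ∪ {ind (lowSet n m ∪ {b₁}), ind (lowSet n m ∪ {b₂})}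

variable {b₁ b₂ : Fin n}

theorem filter_hDownClosed_eq_excludedVecs (hb₁ : m ≤ b₁) (hb₂ : m ≤ b₂) :
    univ.filter (fun x => HDownClosed n m (supp x) ∧
      (supp x ⊆ lowSet n m ∪ {b₁} ∨ supp x ⊆ lowSet n m ∪ {b₂})) = excludedVecs n m b₁ b₂ := by
  ext x
  simp only [mem_filter, mem_univ, true_and, excludedVecs, mem_union, mem_supportedIn,
    mem_insert, mem_singleton, eq_ind_iff, and_or_left, hDownClosed_and_subset_iff hb₁,
    hDownClosed_and_subset_iff hb₂]
  tauto

theorem ind_lowSet_union_notMem_supportedIn {b : Fin n} (hb : m ≤ b) :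
    ind (lowSet n m ∪ {b}) ∉ supportedIn (lowSet n m) := fun h =>
  notMem_lowSet hb (mem_supportedIn.mp h (by simp [supp_ind]))

theorem disjoint_supportedIn_pair (hb₁ : m ≤ b₁) (hb₂ : m ≤ b₂) :
    Disjoint (supportedIn (lowSet n m)) {ind (lowSet n m ∪ {b₁}), ind (lowSet n m ∪ {b₂})} := by
  rw [disjoint_insert_right, disjoint_singleton_right]
  exact ⟨ind_lowSet_union_notMem_supportedIn hb₁, ind_lowSet_union_notMem_supportedIn hb₂⟩

theorem ind_lowSet_union_ne (hb₂ : m ≤ b₂) (hb : b₁ ≠ b₂) :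
    ind (lowSet n m ∪ {b₁}) ≠ ind (lowSet n m ∪ {b₂}) := fun h => by
  have hmem : b₂ ∈ supp (ind (lowSet n m ∪ {b₂})) := by simp [supp_ind]
  rw [← h, supp_ind] at hmem
  simp [notMem_lowSet hb₂, Ne.symm hb] at hmem

theorem card_excludedVecs (hmn : m ≤ n) (hb₁ : m ≤ b₁) (hb₂ : m ≤ b₂) (hb : b₁ ≠ b₂) :
    #(excludedVecs n m b₁ b₂) = 2 ^ m + 2 := by
  rw [excludedVecs, card_union_of_disjoint (disjoint_supportedIn_pair hb₁ hb₂), card_supportedIn,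
    card_lowSet hmn, card_pair (ind_lowSet_union_ne hb₂ hb)]

theorem two_mul_wtD_excludedVecs_le (hmn : m ≤ n) (hb₁ : m ≤ b₁) (hb₂ : m ≤ b₂)
    (u : Fin n → ZMod 2) : 2 * wtD (excludedVecs n m b₁ b₂) u ≤ 2 ^ m + 4 := by
  have hlow := two_mul_wtD_supportedIn_le (lowSet n m) u
  have hpair := (wtD_le_card _ u).trans
    (card_le_two (a := ind (lowSet n m ∪ {b₁})) (b := ind (lowSet n m ∪ {b₂})))
  rw [card_lowSet hmn] at hlow
  rw [excludedVecs, wtD_union_of_disjoint (disjoint_supportedIn_pair hb₁ hb₂)]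
  omega

/-- `eᵢ` with `i ∈ [m]` is `1` on both vectors outside the subspace, so the bound above is
attained. -/
theorem two_mul_wtD_excludedVecs_single (hmn : m ≤ n) (hb₁ : m ≤ b₁) (hb₂ : m ≤ b₂)
    (hb : b₁ ≠ b₂) {i : Fin n} (hi : i ∈ lowSet n m) :
    2 * wtD (excludedVecs n m b₁ b₂) (Pi.single i 1) = 2 ^ m + 4 := by
  have hlow := two_mul_wtD_supportedIn hi (u := Pi.single i 1) (by simp)
  have hpair : wtD {ind (lowSet n m ∪ {b₁}), ind (lowSet n m ∪ {b₂})} (Pi.single i 1) = 2 := by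
    rw [wtD, filter_true_of_mem, card_pair (ind_lowSet_union_ne hb₂ hb)]
    intro x hx
    rw [single_one_ip]
    rcases mem_insert.mp hx with rfl | hx <;> [skip; rw [mem_singleton.mp hx]] <;>
      simp [ind, hi]
  rw [card_lowSet hmn] at hlow
  rw [excludedVecs, wtD_union_of_disjoint (disjoint_supportedIn_pair hb₁ hb₂), hpair]
  omega

end HierarchicalPoset

section ComplementCode

variable {n m : ℕ} {b₁ b₂ : Fin n}

theorem card_univ_sdiff_excludedVecs (hmn : m ≤ n) (hb₁ : m ≤ b₁) (hb₂ : m ≤ b₂)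
    (hb : b₁ ≠ b₂) : #(univ \ excludedVecs n m b₁ b₂) = 2 ^ n - 2 ^ m - 2 := by
  have := card_sdiff_add_card_eq_card (subset_univ (excludedVecs n m b₁ b₂))
  rw [card_excludedVecs hmn hb₁ hb₂ hb, card_univ, Fintype.card_fun, ZMod.card,
    Fintype.card_fin] at this
  omega

theorem le_wtD_univ_sdiff_excludedVecs (hm : 0 < m) (hmn : m ≤ n) (hb₁ : m ≤ b₁)
    (hb₂ : m ≤ b₂) {u : Fin n → ZMod 2} (hu : u ≠ 0) :
    2 ^ (n - 1) - 2 ^ (m - 1) - 2 ≤ wtD (univ \ excludedVecs n m b₁ b₂) u := by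
  have hsplit := wtD_sdiff_add_wtD (subset_univ (excludedVecs n m b₁ b₂)) u
  have huniv := two_mul_wtD_univ hu
  have hexcl := two_mul_wtD_excludedVecs_le hmn hb₁ hb₂ u
  rw [← mul_pow_sub_one (by omega) 2] at huniv
  rw [← mul_pow_sub_one hm.ne' 2] at hexcl
  omega

theorem wtD_univ_sdiff_excludedVecs_single (hm : 0 < m) (hmn : m ≤ n) (hb₁ : m ≤ b₁)
    (hb₂ : m ≤ b₂) (hb : b₁ ≠ b₂) {i : Fin n} (hi : i ∈ lowSet n m) :
    wtD (univ \ excludedVecs n m b₁ b₂) (Pi.single i 1) = 2 ^ (n - 1) - 2 ^ (m - 1) - 2 := by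
  have hsplit := wtD_sdiff_add_wtD (subset_univ (excludedVecs n m b₁ b₂)) (Pi.single i 1)
  have huniv := two_mul_wtD_univ (u := Pi.single i 1) (Pi.single_ne_zero_iff.mpr one_ne_zero)
  have hexcl := two_mul_wtD_excludedVecs_single hmn hb₁ hb₂ hb hi
  rw [← mul_pow_sub_one (by omega) 2] at huniv
  rw [← mul_pow_sub_one hm.ne' 2] at hexcl
  omega

end ComplementCode

section GriesmerSum

variable {n m : ℕ}

theorem sum_range_two_pow_sub_one_sub (k : ℕ) : ∑ i ∈ range k, 2 ^ (k - 1 - i) = 2 ^ k - 1 := by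
  rw [sum_range_reflect (fun i => 2 ^ i) k, Nat.geomSum_eq le_rfl]
  simp

/-- The `i`-th Griesmer term `⌈(2^{n-1} - 2^{m-1} - 1) / 2^i⌉` is `2^{n-1-i}` minus the `i`-th
term of the expansions of `2^{m-1}` (present for `i < m`) and of `1` (present for `i = 0`). -/
theorem griesmer_term_add (hm : 2 ≤ m) (hmn : m < n) {i : ℕ} (hi : i < n) :
    (2 ^ (n - 1) - 2 ^ (m - 1) - 1 + 2 ^ i - 1) / 2 ^ i
      + (if i < m then 2 ^ (m - 1 - i) else 0) + (if i = 0 then 1 else 0) = 2 ^ (n - 1 - i) := by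
  have hA : 2 ^ (n - 1 - i) * 2 ^ i = 2 ^ (n - 1) := by rw [← pow_add]; congr 1; omega
  have hM : 2 ≤ 2 ^ (m - 1) := Nat.le_self_pow (by omega) 2
  have hMm : 2 * 2 ^ (m - 1) = 2 ^ m := by rw [← pow_succ']; congr 1; omega
  have hmn_pow : 2 ^ m ≤ 2 ^ (n - 1) := Nat.pow_le_pow_right two_pos (by omega)
  rcases Nat.eq_zero_or_pos i with rfl | hi0
  · simp only [pow_zero, Nat.div_one, tsub_zero, if_pos (by omega : 0 < m), if_true]
    omega
  have hP : 2 ≤ 2 ^ i := Nat.le_self_pow hi0.ne' 2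
  rw [if_neg hi0.ne', add_zero]
  by_cases him : i < m
  · have hB : 2 ^ (m - 1 - i) * 2 ^ i = 2 ^ (m - 1) := by rw [← pow_add]; congr 1; omega
    have hBA : 2 ^ (m - 1 - i) ≤ 2 ^ (n - 1 - i) := Nat.pow_le_pow_right two_pos (by omega)
    have hsub := Nat.sub_mul (2 ^ (n - 1 - i)) (2 ^ (m - 1 - i)) (2 ^ i)
    rw [if_pos him, Nat.div_eq_of_lt_le (k := 2 ^ (n - 1 - i) - 2 ^ (m - 1 - i))]
    · omega
    · omega
    · rw [add_mul]; omega
  · have hmi : 2 ^ m ≤ 2 ^ i := Nat.pow_le_pow_right two_pos (by omega)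
    rw [if_neg him, add_zero, Nat.div_eq_of_lt_le (k := 2 ^ (n - 1 - i))]
    · omega
    · rw [add_mul]; omega

theorem griesmer_sum_eq (hm : 2 ≤ m) (hmn : m < n) :
    ∑ i ∈ range n, (2 ^ (n - 1) - 2 ^ (m - 1) - 1 + 2 ^ i - 1) / 2 ^ i = 2 ^ n - 2 ^ m - 1 := by
  have h := sum_congr rfl fun i hi => griesmer_term_add hm hmn (mem_range.mp hi)
  have hlow : (range n).filter (· < m) = range m := by
    ext i; simp only [mem_filter, mem_range]; omega
  rw [sum_range_two_pow_sub_one_sub, sum_add_distrib, sum_add_distrib, ← sum_filter, hlow,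
    sum_range_two_pow_sub_one_sub, sum_ite_eq' (range n) 0 (fun _ => 1),
    if_pos (mem_range.mpr (by omega))] at h
  have hpow : 1 ≤ 2 ^ m := Nat.one_le_two_pow
  omega

end GriesmerSum

/-- **Theorem 6.2 (optimality).**  For `1 < m ≤ n−2` and distinct singletons
`B₁, B₂ ⊆ [n]∖[m]`, the code `C_D` built from the ideals `[m]∪B₁`, `[m]∪B₂` of
`ℍ(m,n)` has length `|D| = 2ⁿ − 2^m − 2`, dimension `n` (the map `u ↦ c_{D,u}` is
injective), minimum nonzero codeword weight `d = 2^{n−1} − 2^{m−1} − 2`, and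
`Σ_{i=0}^{n−1} ⌈(d+1)/2ⁱ⌉ > 2ⁿ − 2^m − 2`, so by the Griesmer bound `C_D` is
distance-optimal. -/
theorem stmt_15 (n m : ℕ) (hm : 1 < m) (hmn : m ≤ n - 2)
    (B₁ B₂ : Finset (Fin n))
    (hB₁ : ∀ j ∈ B₁, m ≤ (j : ℕ)) (hB₂ : ∀ j ∈ B₂, m ≤ (j : ℕ))
    (hB₁card : B₁.card = 1) (hB₂card : B₂.card = 1) (hBne : B₁ ≠ B₂)
    (D : Finset (Fin n → ZMod 2))
    (hD : D = Finset.univ.filter (fun x =>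
      ¬ (HDownClosed n m (supp x) ∧
          (supp x ⊆ lowSet n m ∪ B₁ ∨ supp x ⊆ lowSet n m ∪ B₂)))) :
    D.card = 2 ^ n - 2 ^ m - 2
    ∧ (∀ u₁ u₂ : Fin n → ZMod 2, (∀ x ∈ D, ip u₁ x = ip u₂ x) → u₁ = u₂)
    ∧ (∀ u : Fin n → ZMod 2, wtD D u ≠ 0 →
        2 ^ (n - 1) - 2 ^ (m - 1) - 2 ≤ wtD D u)
    ∧ (∃ u : Fin n → ZMod 2, wtD D u = 2 ^ (n - 1) - 2 ^ (m - 1) - 2)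
    ∧ 2 ^ n - 2 ^ m - 2 <
        ∑ i ∈ Finset.range n, (2 ^ (n - 1) - 2 ^ (m - 1) - 1 + 2 ^ i - 1) / 2 ^ i := by
  obtain ⟨b₁, rfl⟩ := card_eq_one.mp hB₁card
  obtain ⟨b₂, rfl⟩ := card_eq_one.mp hB₂card
  have hb₁ := hB₁ b₁ (mem_singleton_self _)
  have hb₂ := hB₂ b₂ (mem_singleton_self _)
  have hb : b₁ ≠ b₂ := fun h => hBne (h ▸ rfl)
  rw [filter_not, filter_hDownClosed_eq_excludedVecs hb₁ hb₂] at hD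
  subst hD
  have hmin := fun u => le_wtD_univ_sdiff_excludedVecs (u := u) (by omega) (by omega) hb₁ hb₂
  have hd_pos : 2 ^ (m - 1) + 2 < 2 ^ (n - 1) := by
    have hle : 2 ^ (m - 1 + 2) ≤ 2 ^ (n - 1) := Nat.pow_le_pow_right two_pos (by omega)
    have hM : 2 ≤ 2 ^ (m - 1) := Nat.le_self_pow (by omega) 2
    rw [pow_add] at hle
    omega
  refine ⟨card_univ_sdiff_excludedVecs (by omega) hb₁ hb₂ hb,
    fun _ _ => eq_of_forall_mem_ip_eq fun u hu => by have := hmin u hu; omega,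
    fun u hu => hmin u fun h0 => hu (h0 ▸ wtD_zero _),
    ⟨_, wtD_univ_sdiff_excludedVecs_single (by omega) (by omega) hb₁ hb₂ hb
      (i := ⟨0, by omega⟩) (mem_lowSet.mpr (by simp only; omega))⟩, ?_⟩
  have hle : 2 ^ (m + 1) ≤ 2 ^ n := Nat.pow_le_pow_right two_pos (by omega)
  have hM : 2 ≤ 2 ^ m := Nat.le_self_pow (by omega) 2
  rw [pow_succ] at hle
  rw [griesmer_sum_eq (by omega) (by omega)]
  omega
end

section
/- Let n ≥ 4, 1 < m ≤ n − 2, and let B₁, B₂ be two distinct singleton subsets of [n]∖[m]. Set D = {x ∈ 𝔽₂ⁿ : supp(x) is not a down-closed subset of ℍ(m,n) contained in [m]∪B₁ or in [m]∪B₂}. Then the code C_D = {c_{D,u} : u ∈ 𝔽₂ⁿ} is minimal. -/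
open Finset

lemma z2cases : ∀ a : ZMod 2, a = 0 ∨ a = 1 := by decide
lemma z2ne : ∀ a : ZMod 2, a ≠ 0 ↔ a = 1 := by decide
lemma z2add : ∀ a b : ZMod 2, a + b + b = a := by decide
lemma z2three : (1 : ZMod 2) + 1 + 1 = 1 := by decide
lemma z2cancel : ∀ c s t : ZMod 2, c + s + t = c → s = t := by decide

lemma ip_add {n : ℕ} (u x y : Fin n → ZMod 2) : ip u (x + y) = ip u x + ip u y := by
  simp [ip, Pi.add_apply, mul_add, Finset.sum_add_distrib]

lemma ip_zero {n : ℕ} (u : Fin n → ZMod 2) : ip u 0 = 0 := by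
  simp [ip]

lemma ip_single {n : ℕ} (u : Fin n → ZMod 2) (i : Fin n) : ip u (Pi.single i 1) = u i := by
  simp [ip, Pi.single_apply]

lemma ip_zero_left {n : ℕ} (x : Fin n → ZMod 2) : ip 0 x = 0 := by
  simp [ip]

lemma exists_ne_zero {n : ℕ} {u : Fin n → ZMod 2} (hu : u ≠ 0) : ∃ i, u i = 1 := by
  rcases Function.ne_iff.mp hu with ⟨i, hi⟩
  exact ⟨i, (z2ne (u i)).mp (by simpa using hi)⟩

lemma exists_pq {n : ℕ} {u u' : Fin n → ZMod 2} (hu : u ≠ 0) (hu' : u' ≠ 0)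
    (hne : u ≠ u') :
    ∃ p q : Fin n → ZMod 2, (ip u p = 1 ∧ ip u' p = 0) ∧ (ip u q = 0 ∧ ip u' q = 1) := by
  rcases Function.ne_iff.mp hne with ⟨i, hi⟩
  rcases z2cases (u i) with h1 | h1 <;> rcases z2cases (u' i) with h2 | h2
  · exact absurd (h1.trans h2.symm) hi
  · -- (u i, u' i) = (0,1): q := e_i, find p
    rcases exists_ne_zero hu with ⟨j, hj⟩
    rcases z2cases (u' j) with h3 | h3
    · exact ⟨Pi.single j 1, Pi.single i 1, ⟨by rw [ip_single, hj], by rw [ip_single, h3]⟩,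
        ⟨by rw [ip_single, h1], by rw [ip_single, h2]⟩⟩
    · refine ⟨Pi.single i 1 + Pi.single j 1, Pi.single i 1, ⟨?_, ?_⟩,
        ⟨by rw [ip_single, h1], by rw [ip_single, h2]⟩⟩
      · rw [ip_add, ip_single, ip_single, h1, hj]; decide
      · rw [ip_add, ip_single, ip_single, h2, h3]; decide
  · -- (u i, u' i) = (1,0): p := e_i, find q
    rcases exists_ne_zero hu' with ⟨j, hj⟩
    rcases z2cases (u j) with h3 | h3
    · exact ⟨Pi.single i 1, Pi.single j 1, ⟨by rw [ip_single, h1], by rw [ip_single, h2]⟩,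
        ⟨by rw [ip_single, h3], by rw [ip_single, hj]⟩⟩
    · refine ⟨Pi.single i 1, Pi.single i 1 + Pi.single j 1,
        ⟨by rw [ip_single, h1], by rw [ip_single, h2]⟩, ?_, ?_⟩
      · rw [ip_add, ip_single, ip_single, h1, h3]; decide
      · rw [ip_add, ip_single, ip_single, h2, hj]; decide
  · exact absurd (h1.trans h2.symm) hi

lemma fiber_shift {n : ℕ} (u u' : Fin n → ZMod 2) (t : Fin n → ZMod 2) (a b : ZMod 2) :
    (univ.filter (fun x : Fin n → ZMod 2 => ip u x = a ∧ ip u' x = b)).card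
      = (univ.filter (fun x : Fin n → ZMod 2 =>
          ip u x = a + ip u t ∧ ip u' x = b + ip u' t)).card := by
  have key : ∀ x : Fin n → ZMod 2, x + t + t = x := by
    intro x; funext i; exact z2add _ _
  apply Finset.card_bij' (fun x _ => x + t) (fun y _ => y + t)
  · intro x hx
    simp only [Finset.mem_filter, Finset.mem_univ, true_and] at hx ⊢
    rw [ip_add, ip_add, hx.1, hx.2]; exact ⟨rfl, rfl⟩
  · intro y hy
    simp only [Finset.mem_filter, Finset.mem_univ, true_and] at hy ⊢
    rw [ip_add, ip_add, hy.1, hy.2]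
    constructor <;> [exact z2add _ _; exact z2add _ _]
  · intro x _; exact key x
  · intro y _; exact key y


lemma fiber_card {n : ℕ} (hn : 2 ≤ n) {u u' : Fin n → ZMod 2} {p q : Fin n → ZMod 2}
    (hp : ip u p = 1 ∧ ip u' p = 0) (hq : ip u q = 0 ∧ ip u' q = 1) (a b : ZMod 2) :
    (univ.filter (fun x : Fin n → ZMod 2 => ip u x = a ∧ ip u' x = b)).card = 2 ^ (n - 2) := by
  set F : ZMod 2 → ZMod 2 → Finset (Fin n → ZMod 2) :=
    fun a b => univ.filter (fun x => ip u x = a ∧ ip u' x = b) with hF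
  have all_eq : ∀ a b : ZMod 2, (F a b).card = (F 0 0).card := by
    have h10 : (F 0 0).card = (F 1 0).card := by
      have := fiber_shift u u' p 0 0
      rwa [hp.1, hp.2, zero_add, add_zero] at this
    have h01 : (F 0 0).card = (F 0 1).card := by
      have := fiber_shift u u' q 0 0
      rw [hq.1, hq.2] at this
      simpa using this
    have h11 : (F 0 0).card = (F 1 1).card := by
      have := fiber_shift u u' (p + q) 0 0
      rw [ip_add, ip_add, hp.1, hp.2, hq.1, hq.2] at this
      simpa using this
    intro a b
    rcases z2cases a with ha | ha <;> rcases z2cases b with hb | hb <;>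
      subst ha <;> subst hb <;> omega
  have hsplit : ∀ P : (Fin n → ZMod 2) → Prop, ∀ _ : DecidablePred P,
      (univ.filter (fun x => P x ∧ ip u' x = 0)).card
        + (univ.filter (fun x => P x ∧ ip u' x = 1)).card
      = (univ.filter P).card := by
    intro P _
    have h := Finset.card_filter_add_card_filter_not
      (s := univ.filter P) (p := fun x => ip u' x = 0)
    rw [Finset.filter_filter, Finset.filter_filter] at h
    have he : filter (fun a => P a ∧ ¬ip u' a = 0) univ
        = filter (fun x => P x ∧ ip u' x = 1) univ := by
      apply Finset.filter_congr
      intro x _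
      simp [z2ne]
    rw [he] at h
    exact h
  have htop : (univ.filter (fun x : Fin n → ZMod 2 => ip u x = 0)).card
      + (univ.filter (fun x : Fin n → ZMod 2 => ip u x = 1)).card
      = 2 ^ n := by
    have h := Finset.card_filter_add_card_filter_not
      (s := (univ : Finset (Fin n → ZMod 2))) (p := fun x => ip u x = 0)
    have hcu : (univ : Finset (Fin n → ZMod 2)).card = 2 ^ n := by
      simp [Finset.card_univ]
    rw [hcu] at h
    have he : filter (fun a => ¬ip u a = 0) univ
        = filter (fun x : Fin n → ZMod 2 => ip u x = 1) univ := by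
      apply Finset.filter_congr
      intro x _
      simp [z2ne]
    rw [he] at h
    exact h
  have hsum : (F 0 0).card + (F 0 1).card + ((F 1 0).card + (F 1 1).card) = 2 ^ n := by
    rw [hF]
    rw [hsplit (fun x => ip u x = 0) _, hsplit (fun x => ip u x = 1) _]
    exact htop
  have hpow : 2 ^ n = 4 * 2 ^ (n - 2) := by
    have : n = 2 + (n - 2) := by omega
    rw [this, pow_add]
    norm_num
  have h4 : 4 * (F 0 0).card = 4 * 2 ^ (n - 2) := by
    rw [all_eq 0 1, all_eq 1 0, all_eq 1 1] at hsum
    omega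
  have : (F 0 0).card = 2 ^ (n - 2) := by omega
  rw [all_eq a b, this]

lemma VL_card {n m : ℕ} (hmn : m ≤ n) :
    (univ.filter (fun x : Fin n → ZMod 2 => ∀ j : Fin n, m ≤ (j:ℕ) → x j = 0)).card ≤ 2 ^ m := by
  have hcard : (univ : Finset (Fin m → ZMod 2)).card = 2 ^ m := by
    simp [Finset.card_univ]
  rw [← hcard]
  apply Finset.card_le_card_of_injOn
    (f := fun x : Fin n → ZMod 2 => (fun i : Fin m => x (Fin.castLE hmn i)))
  · intro x _; exact Finset.mem_univ _
  · intro x hx y hy hxy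
    simp only [Finset.coe_filter, Set.mem_setOf_eq, Finset.mem_univ, true_and] at hx hy
    funext j
    by_cases hj : (j : ℕ) < m
    · have h' := congrFun hxy ⟨(j : ℕ), hj⟩
      simpa [Fin.castLE] using h'
    · rw [hx j (by omega), hy j (by omega)]

/-- **Theorem 6.2 (minimality).**  For `n ≥ 4`, `1 < m ≤ n−2` and distinct
singletons `B₁, B₂ ⊆ [n]∖[m]`, the code `C_D` built from the ideals `[m]∪B₁`,
`[m]∪B₂` of `ℍ(m,n)` is minimal: any two nonzero codewords with nested supports
are equal. -/
theorem stmt_16 (n m : ℕ) (hn : 4 ≤ n) (hm : 1 < m) (hmn : m ≤ n - 2)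
    (B₁ B₂ : Finset (Fin n))
    (hB₁ : ∀ j ∈ B₁, m ≤ (j : ℕ)) (hB₂ : ∀ j ∈ B₂, m ≤ (j : ℕ))
    (hB₁card : B₁.card = 1) (hB₂card : B₂.card = 1) (hBne : B₁ ≠ B₂)
    (D : Finset (Fin n → ZMod 2))
    (hD : D = Finset.univ.filter (fun x =>
      ¬ (HDownClosed n m (supp x) ∧
          (supp x ⊆ lowSet n m ∪ B₁ ∨ supp x ⊆ lowSet n m ∪ B₂)))) :
    ∀ u u' : Fin n → ZMod 2,
      (∃ x ∈ D, ip u x ≠ 0) → (∃ x ∈ D, ip u' x ≠ 0) →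
      (∀ x ∈ D, ip u' x ≠ 0 → ip u x ≠ 0) →
      ∀ x ∈ D, ip u' x = ip u x := by
  intro u u' hu hu' hsub
  by_cases heq : u = u'
  · subst heq; intro x _; rfl
  exfalso
  have hu0 : u ≠ 0 := by
    rintro rfl
    rcases hu with ⟨x, _, hx⟩
    exact hx (ip_zero_left x)
  have hu'0 : u' ≠ 0 := by
    rintro rfl
    rcases hu' with ⟨x, _, hx⟩
    exact hx (ip_zero_left x)
  obtain ⟨p, q, hp, hq⟩ := exists_pq hu0 hu'0 heq
  set A := univ.filter (fun x : Fin n → ZMod 2 => ip u x = 0 ∧ ip u' x = 1) with hA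
  have hcardA : A.card = 2 ^ (n - 2) := fiber_card (by omega) hp hq 0 1
  have hcardA4 : 4 ≤ A.card := by
    rw [hcardA]
    calc (4:ℕ) = 2 ^ 2 := by norm_num
    _ ≤ 2 ^ (n - 2) := Nat.pow_le_pow_right (by norm_num) (by omega)
  obtain ⟨b₁, hb₁⟩ := Finset.card_eq_one.mp hB₁card
  obtain ⟨b₂, hb₂⟩ := Finset.card_eq_one.mp hB₂card
  have hmb₁ : m ≤ (b₁ : ℕ) := hB₁ b₁ (by simp [hb₁])
  have hmb₂ : m ≤ (b₂ : ℕ) := hB₂ b₂ (by simp [hb₂])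
  have hbne : b₁ ≠ b₂ := by
    rintro rfl
    exact hBne (hb₁.trans hb₂.symm)
  set X₁ : Fin n → ZMod 2 := fun i => if ((i : ℕ) < m ∨ i = b₁) then 1 else 0 with hX₁
  set X₂ : Fin n → ZMod 2 := fun i => if ((i : ℕ) < m ∨ i = b₂) then 1 else 0 with hX₂
  have hX₁b₁ : X₁ b₁ = 1 := by simp [hX₁]
  have hX₂b₂ : X₂ b₂ = 1 := by simp [hX₂]
  have hX₁b₂ : X₁ b₂ = 0 := by
    rw [hX₁]
    simp only []
    rw [if_neg]
    push_neg
    exact ⟨by omega, hbne.symm⟩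
  have hX₂b₁ : X₂ b₁ = 0 := by
    rw [hX₂]
    simp only []
    rw [if_neg]
    push_neg
    exact ⟨by omega, hbne⟩
  -- characterization of the complement of D
  have hE : ∀ x : Fin n → ZMod 2, x ∉ D →
      (∀ j : Fin n, m ≤ (j : ℕ) → x j = 0) ∨ x = X₁ ∨ x = X₂ := by
    intro x hxD
    rw [hD] at hxD
    simp only [Finset.mem_filter, Finset.mem_univ, true_and, not_not] at hxD
    obtain ⟨hdc, hs12⟩ := hxD
    by_cases hlow : ∀ j : Fin n, m ≤ (j : ℕ) → x j = 0
    · exact Or.inl hlow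
    right
    push_neg at hlow
    obtain ⟨j, hj, hxj⟩ := hlow
    have hjs : j ∈ supp x := by simp [supp, hxj]
    have hmem : ∀ (b : Fin n) (B : Finset (Fin n)), B = {b} →
        supp x ⊆ lowSet n m ∪ B →
        x = fun i : Fin n => if ((i : ℕ) < m ∨ i = b) then (1 : ZMod 2) else 0 := by
      intro b B hBb hs
      have hmb : m ≤ (b : ℕ) := by
        rcases Finset.mem_union.mp (hs hjs) with h | h
        · exfalso; simp [lowSet] at h; omega
        · rw [hBb, Finset.mem_singleton] at h; omega
      have hjb : j = b := by
        rcases Finset.mem_union.mp (hs hjs) with h | h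
        · exfalso; simp [lowSet] at h; omega
        · rwa [hBb, Finset.mem_singleton] at h
      subst hjb
      funext i
      by_cases him : (i : ℕ) < m
      · have hi : i ∈ supp x := hdc i j (Or.inr ⟨him, hj⟩) hjs
        have hxi : x i = 1 := (z2ne _).mp (by simpa [supp] using hi)
        rw [hxi, if_pos (Or.inl him)]
      · by_cases hib : i = j
        · subst hib
          rw [(z2ne _).mp hxj, if_pos (Or.inr rfl)]
        · have hxi : x i = 0 := by
            by_contra hc
            have hi : i ∈ supp x := by simp [supp, hc]
            rcases Finset.mem_union.mp (hs hi) with h | h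
            · simp [lowSet] at h; omega
            · rw [hBb, Finset.mem_singleton] at h; exact hib h
          rw [hxi, if_neg]
          push_neg
          exact ⟨by omega, hib⟩
    rcases hs12 with hs | hs
    · exact Or.inl (hmem b₁ B₁ hb₁ hs)
    · exact Or.inr (hmem b₂ B₂ hb₂ hs)
  -- A avoids D
  have hAE : ∀ x ∈ A, (∀ j : Fin n, m ≤ (j : ℕ) → x j = 0) ∨ x = X₁ ∨ x = X₂ := by
    intro x hx
    rw [hA, Finset.mem_filter] at hx
    apply hE
    intro hxD
    exact (hsub x hxD (by rw [hx.2.2]; exact one_ne_zero)) hx.2.1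
  -- triple-sum closure of A
  have htriple : ∀ a ∈ A, ∀ b ∈ A, ∀ c ∈ A, a + b + c ∈ A := by
    intro a ha b hb c hc
    rw [hA, Finset.mem_filter] at ha hb hc ⊢
    refine ⟨Finset.mem_univ _, ?_, ?_⟩
    · rw [ip_add, ip_add, ha.2.1, hb.2.1, hc.2.1]; decide
    · rw [ip_add, ip_add, ha.2.2, hb.2.2, hc.2.2]; decide
  -- elements of A off X₁, X₂ are low
  have hA' : ∀ x ∈ A \ ({X₁, X₂} : Finset (Fin n → ZMod 2)),
      ∀ j : Fin n, m ≤ (j : ℕ) → x j = 0 := by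
    intro x hx
    rw [Finset.mem_sdiff] at hx
    rcases hAE x hx.1 with h | h | h
    · exact h
    · exact absurd (by rw [h]; simp : x ∈ ({X₁, X₂} : Finset _)) hx.2
    · exact absurd (by rw [h]; simp : x ∈ ({X₁, X₂} : Finset _)) hx.2
  have hcard2 : 2 ≤ (A \ ({X₁, X₂} : Finset (Fin n → ZMod 2))).card := by
    have h1 : A.card - ({X₁, X₂} : Finset (Fin n → ZMod 2)).card
        ≤ (A \ ({X₁, X₂} : Finset (Fin n → ZMod 2))).card := Finset.le_card_sdiff _ _
    have h2 : ({X₁, X₂} : Finset (Fin n → ZMod 2)).card ≤ 2 := by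
      apply le_trans (Finset.card_insert_le _ _); simp
    omega
  by_cases h1 : X₁ ∈ A <;> by_cases h2 : X₂ ∈ A
  · -- both
    obtain ⟨a, ha⟩ := Finset.card_pos.mp (by omega :
      0 < (A \ ({X₁, X₂} : Finset (Fin n → ZMod 2))).card)
    have haA : a ∈ A := (Finset.mem_sdiff.mp ha).1
    have hz : X₁ + X₂ + a ∈ A := htriple _ h1 _ h2 _ haA
    have hzb₁ : (X₁ + X₂ + a) b₁ = 1 := by
      simp only [Pi.add_apply]
      rw [hX₁b₁, hX₂b₁, hA' a ha b₁ hmb₁]; decide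
    have hzb₂ : (X₁ + X₂ + a) b₂ = 1 := by
      simp only [Pi.add_apply]
      rw [hX₁b₂, hX₂b₂, hA' a ha b₂ hmb₂]; decide
    rcases hAE _ hz with h | h | h
    · rw [h b₁ hmb₁] at hzb₁; exact one_ne_zero hzb₁.symm
    · rw [h] at hzb₂; rw [hX₁b₂] at hzb₂; exact one_ne_zero hzb₂.symm
    · rw [h] at hzb₁; rw [hX₂b₁] at hzb₁; exact one_ne_zero hzb₁.symm
  · -- X₁ ∈ A, X₂ ∉ A
    obtain ⟨a, ha, a', ha', hane⟩ := Finset.one_lt_card.mp (by omega :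
      1 < (A \ ({X₁, X₂} : Finset (Fin n → ZMod 2))).card)
    have hz : X₁ + a + a' ∈ A :=
      htriple _ h1 _ (Finset.mem_sdiff.mp ha).1 _ (Finset.mem_sdiff.mp ha').1
    have hzb₁ : (X₁ + a + a') b₁ = 1 := by
      simp only [Pi.add_apply]
      rw [hX₁b₁, hA' a ha b₁ hmb₁, hA' a' ha' b₁ hmb₁]; decide
    rcases hAE _ hz with h | h | h
    · rw [h b₁ hmb₁] at hzb₁; exact one_ne_zero hzb₁.symm
    · exact hane (funext fun i => z2cancel _ _ _ (congrFun h i))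
    · rw [h] at hz; exact h2 hz
  · -- X₂ ∈ A, X₁ ∉ A
    obtain ⟨a, ha, a', ha', hane⟩ := Finset.one_lt_card.mp (by omega :
      1 < (A \ ({X₁, X₂} : Finset (Fin n → ZMod 2))).card)
    have hz : X₂ + a + a' ∈ A :=
      htriple _ h2 _ (Finset.mem_sdiff.mp ha).1 _ (Finset.mem_sdiff.mp ha').1
    have hzb₂ : (X₂ + a + a') b₂ = 1 := by
      simp only [Pi.add_apply]
      rw [hX₂b₂, hA' a ha b₂ hmb₂, hA' a' ha' b₂ hmb₂]; decide
    rcases hAE _ hz with h | h | h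
    · rw [h b₂ hmb₂] at hzb₂; exact one_ne_zero hzb₂.symm
    · rw [h] at hz; exact h1 hz
    · exact hane (funext fun i => z2cancel _ _ _ (congrFun h i))
  · -- neither: A ⊆ VL
    set VL := univ.filter (fun x : Fin n → ZMod 2 => ∀ j : Fin n, m ≤ (j : ℕ) → x j = 0)
      with hVL
    have hsubVL : A ⊆ VL := by
      intro x hx
      rcases hAE x hx with h | h | h
      · rw [hVL, Finset.mem_filter]; exact ⟨Finset.mem_univ _, h⟩
      · rw [h] at hx; exact absurd hx h1
      · rw [h] at hx; exact absurd hx h2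
    have hVLcard : VL.card ≤ 2 ^ m := VL_card (by omega)
    have hle : VL.card ≤ A.card := by
      rw [hcardA]
      calc VL.card ≤ 2 ^ m := hVLcard
      _ ≤ 2 ^ (n - 2) := Nat.pow_le_pow_right (by norm_num) (by omega)
    have hAeq : A = VL := Finset.eq_of_subset_of_card_le hsubVL hle
    have h0 : (0 : Fin n → ZMod 2) ∈ VL := by
      rw [hVL, Finset.mem_filter]
      exact ⟨Finset.mem_univ _, fun j _ => rfl⟩
    rw [← hAeq, hA, Finset.mem_filter] at h0
    have := h0.2.2
    rw [ip_zero] at this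
    exact one_ne_zero this.symm
end
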